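/- Let L be a decidable set of propositional formulas closed under substitution (a decidable propositional logic). Then there exists a sequence (Mᵢ)_{i∈ℕ} of finite-valued matrices such that L ⊆ Taut(Mᵢ) for every i, Taut(Mᵢ₊₁) ⊆ Taut(Mᵢ) for every i, and ⋂ᵢ Taut(Mᵢ) = L. -/

import Mathlib

/-- Formulas of a propositional language with connectives `C` of arities `ar`. -/
inductive Fml (C : Type) (ar : C → ℕ) : Type
  | var : ℕ → Fml C ar
  | app : (c : C) → (Fin (ar c) → Fml C ar) → Fml C ar

/-- A (matrix) for the language: truth values, designated values, truth functions. -/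
structure Mat (C : Type) (ar : C → ℕ) where
  V : Type
  desig : Set V
  interp : (c : C) → (Fin (ar c) → V) → V

variable {C : Type} {ar : C → ℕ}

/-- Extension of a valuation to all formulas. -/
def Mat.eval (M : Mat C ar) (I : ℕ → M.V) : Fml C ar → M.V
  | .var n => I n
  | .app c f => M.interp c fun i => M.eval I (f i)

/-- The set of tautologies of a matrix. -/
def Mat.Taut (M : Mat C ar) : Set (Fml C ar) :=
  {A | ∀ I : ℕ → M.V, M.eval I A ∈ M.desig}

/-- Substitution of formulas for variables. -/
def subst (σ : ℕ → Fml C ar) : Fml C ar → Fml C ar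
  | .var n => σ n
  | .app c f => .app c fun i => subst σ (f i)

/-- A Hilbert calculus: finitely many axioms and rules (premises, conclusion). -/
structure Calc (C : Type) (ar : C → ℕ) where
  axioms : List (Fml C ar)
  rules : List (List (Fml C ar) × Fml C ar)

/-- Theorems of a Hilbert calculus. -/
inductive Thm (K : Calc C ar) : Fml C ar → Prop
  | ax {A : Fml C ar} (σ : ℕ → Fml C ar) : A ∈ K.axioms → Thm K (subst σ A)
  | rule {r : List (Fml C ar) × Fml C ar} (σ : ℕ → Fml C ar) :
      r ∈ K.rules → (∀ B ∈ r.1, Thm K (subst σ B)) → Thm K (subst σ r.2)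

/-- `M` is normal for `K` (`K` is strongly sound for `M`; `M` is a cover of `K`). -/
def NormalFor (M : Mat C ar) (K : Calc C ar) : Prop :=
  (∀ A ∈ K.axioms, A ∈ M.Taut) ∧
  ∀ r ∈ K.rules, ∀ I : ℕ → M.V,
    (∀ B ∈ r.1, M.eval I B ∈ M.desig) → M.eval I r.2 ∈ M.desig

/-- A concrete numerical encoding of formulas. -/
def encF [Encodable C] : Fml C ar → ℕ
  | .var n => Nat.pair 0 n
  | .app c f =>
      Nat.pair 1 (Nat.pair (Encodable.encode c)
        (Encodable.encode (List.ofFn fun i => encF (f i))))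

/-!
For bounds `d` and `k`, let `boundedMat L d k` be the matrix whose values are the formulas of
depth at most `d` in the variables `0, …, k`, together with one extra value `none` standing for
"too big". Connectives act syntactically, a result that exceeds the bounds becomes `none`, and
the designated values are `none` and the members of `L`. Under a valuation every formula then
evaluates to a substitution instance of itself or to `none`, so closure of `L` under substitution
makes `L` valid in the matrix; the identity valuation refutes every formula within the bounds that
is not in `L`. The matrices are finite because there are finitely many connectives, and the
products of the first `i + 1` of them form the required decreasing sequence.
-/

namespace Fml

def depth : Fml C ar → ℕ
  | .var _ => 0
  | .app _ f => (Finset.univ.sup fun i => depth (f i)) + 1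

def maxVar : Fml C ar → ℕ
  | .var n => n
  | .app _ f => Finset.univ.sup fun i => maxVar (f i)

def Bounded (d k : ℕ) (A : Fml C ar) : Prop :=
  A.depth ≤ d ∧ A.maxVar ≤ k

instance (d k : ℕ) (A : Fml C ar) : Decidable (A.Bounded d k) :=
  instDecidableAnd

theorem depth_lt_depth_app {c : C} (f : Fin (ar c) → Fml C ar) (i : Fin (ar c)) :
    (f i).depth < (app c f).depth :=
  Nat.lt_succ_of_le (Finset.le_sup (f := fun j => (f j).depth) (Finset.mem_univ i))

theorem maxVar_le_maxVar_app {c : C} (f : Fin (ar c) → Fml C ar) (i : Fin (ar c)) :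
    (f i).maxVar ≤ (app c f).maxVar :=
  Finset.le_sup (f := fun j => (f j).maxVar) (Finset.mem_univ i)

theorem Bounded.of_app {d k : ℕ} {c : C} {f : Fin (ar c) → Fml C ar}
    (h : (app c f).Bounded d k) (i : Fin (ar c)) : (f i).Bounded d k :=
  ⟨(depth_lt_depth_app f i).le.trans h.1, (maxVar_le_maxVar_app f i).trans h.2⟩

theorem finite_setOf_bounded [Finite C] (d k : ℕ) :
    {A : Fml C ar | A.Bounded d k}.Finite := by
  have hvars : (Set.range fun n : Fin (k + 1) => (var n : Fml C ar)).Finite := Set.finite_range _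
  induction d with
  | zero =>
    refine hvars.subset ?_
    rintro (n | ⟨c, f⟩) ⟨hd, hv⟩
    · exact ⟨⟨n, Nat.lt_succ_of_le hv⟩, rfl⟩
    · simp [depth] at hd
  | succ d ih =>
    refine (hvars.union (Set.finite_iUnion fun c =>
      (Set.Finite.pi fun _ : Fin (ar c) => ih).image (app c))).subset ?_
    rintro (n | ⟨c, f⟩) ⟨hd, hv⟩
    · exact Or.inl ⟨⟨n, Nat.lt_succ_of_le hv⟩, rfl⟩
    · refine Or.inr (Set.mem_iUnion.2 ⟨c, f, fun i _ => ⟨?_, ?_⟩, rfl⟩)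
      · exact Nat.le_of_lt_succ ((depth_lt_depth_app f i).trans_le hd)
      · exact (maxVar_le_maxVar_app f i).trans hv

end Fml

theorem subst_eq_self {σ : ℕ → Fml C ar} {A : Fml C ar}
    (h : ∀ n ≤ A.maxVar, σ n = .var n) : subst σ A = A := by
  induction A with
  | var n => exact h n le_rfl
  | app c f ih =>
    simp only [subst]
    congr 1
    funext i
    exact ih i fun n hn => h n (hn.trans (Fml.maxVar_le_maxVar_app f i))

section Bounded

variable {d k : ℕ}

abbrev BoundedVal (C : Type) (ar : C → ℕ) (d k : ℕ) : Type :=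
  Option {A : Fml C ar // A.Bounded d k}

def BoundedVal.ofFml (d k : ℕ) (A : Fml C ar) : BoundedVal C ar d k :=
  if h : A.Bounded d k then some ⟨A, h⟩ else none

/-- The overflow value is read back as the variable `k + 1`, which is out of bounds. -/
def BoundedVal.toFml : BoundedVal C ar d k → Fml C ar
  | none => .var (k + 1)
  | some A => A.1

namespace BoundedVal

theorem ofFml_of_bounded {A : Fml C ar} (h : A.Bounded d k) : ofFml d k A = some ⟨A, h⟩ :=
  dif_pos h

theorem ofFml_of_not_bounded {A : Fml C ar} (h : ¬A.Bounded d k) : ofFml d k A = none :=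
  dif_neg h

theorem toFml_ofFml {A : Fml C ar} (h : A.Bounded d k) : (ofFml d k A).toFml = A := by
  rw [ofFml_of_bounded h, toFml]

theorem not_bounded_toFml_none : ¬(toFml (none : BoundedVal C ar d k)).Bounded d k :=
  fun h => Nat.not_succ_le_self k h.2

theorem ofFml_toFml (v : BoundedVal C ar d k) : ofFml d k v.toFml = v := by
  rcases v with _ | ⟨A, hA⟩
  · exact ofFml_of_not_bounded not_bounded_toFml_none
  · exact ofFml_of_bounded hA

theorem ofFml_app_toFml_ofFml (c : C) (f : Fin (ar c) → Fml C ar) :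
    ofFml d k (.app c fun i => (ofFml d k (f i)).toFml) = ofFml d k (.app c f) := by
  by_cases hf : ∀ i, (f i).Bounded d k
  · simp only [toFml_ofFml (hf _)]
  · obtain ⟨i, hi⟩ := not_forall.1 hf
    rw [ofFml_of_not_bounded fun h => hi (h.of_app i), ofFml_of_not_bounded fun h => ?_]
    have := h.of_app i
    rw [ofFml_of_not_bounded hi] at this
    exact not_bounded_toFml_none this

theorem forall_mem_ofFml_iff {L : Set (Fml C ar)} {A : Fml C ar} :
    (∀ B ∈ ofFml d k A, B.1 ∈ L) ↔ (A.Bounded d k → A ∈ L) := by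
  by_cases h : A.Bounded d k
  · simp [ofFml_of_bounded h, h]
  · simp [ofFml_of_not_bounded h, h]

end BoundedVal

open BoundedVal

variable (L : Set (Fml C ar))

def boundedMat (d k : ℕ) : Mat C ar where
  V := BoundedVal C ar d k
  desig := {v | ∀ A ∈ v, A.1 ∈ L}
  interp c g := ofFml d k (.app c fun i => (g i).toFml)

instance [Finite C] : Finite (boundedMat L d k).V :=
  haveI : Finite {A : Fml C ar // A.Bounded d k} := (Fml.finite_setOf_bounded d k).to_subtype
  inferInstanceAs (Finite (Option _))

instance : Nonempty (boundedMat L d k).V := ⟨none⟩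

theorem boundedMat_eval (I : ℕ → (boundedMat L d k).V) (A : Fml C ar) :
    (boundedMat L d k).eval I A = ofFml d k (subst (fun n => (I n).toFml) A) := by
  induction A with
  | var n => exact (ofFml_toFml (I n)).symm
  | app c f ih =>
    show ofFml d k (.app c fun i => ((boundedMat L d k).eval I (f i)).toFml) = _
    simp only [ih, ofFml_app_toFml_ofFml, subst]

theorem mem_taut_boundedMat_iff {A : Fml C ar} :
    A ∈ (boundedMat L d k).Taut ↔ ∀ I : ℕ → BoundedVal C ar d k,
      (subst (fun n => (I n).toFml) A).Bounded d k → subst (fun n => (I n).toFml) A ∈ L :=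
  forall_congr' fun I => by
    rw [boundedMat_eval]
    exact forall_mem_ofFml_iff

theorem subset_taut_boundedMat (hsub : ∀ A ∈ L, ∀ σ : ℕ → Fml C ar, subst σ A ∈ L) :
    L ⊆ (boundedMat L d k).Taut :=
  fun A hA => (mem_taut_boundedMat_iff L).2 fun _ _ => hsub A hA _

theorem mem_of_mem_taut_boundedMat {A : Fml C ar} (hA : A.Bounded d k)
    (hT : A ∈ (boundedMat L d k).Taut) : A ∈ L := by
  have hvar : ∀ n ≤ A.maxVar, (ofFml d k (.var n : Fml C ar)).toFml = .var n :=
    fun n hn => toFml_ofFml ⟨Nat.zero_le d, hn.trans hA.2⟩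
  have := (mem_taut_boundedMat_iff L).1 hT fun n => ofFml d k (.var n)
  rw [subst_eq_self hvar] at this
  exact this hA

theorem iInter_taut_boundedMat (hsub : ∀ A ∈ L, ∀ σ : ℕ → Fml C ar, subst σ A ∈ L) :
    ⋂ n, (boundedMat L n n).Taut = L := by
  refine subset_antisymm (fun A hA => ?_)
    (Set.subset_iInter fun n => subset_taut_boundedMat L hsub)
  exact mem_of_mem_taut_boundedMat L ⟨le_max_left _ _, le_max_right _ _⟩
    (Set.mem_iInter.1 hA (max A.depth A.maxVar))

end Bounded

namespace Mat

def pi {ι : Type} (M : ι → Mat C ar) : Mat C ar where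
  V := ∀ j, (M j).V
  desig := Set.univ.pi fun j => (M j).desig
  interp c g j := (M j).interp c fun i => g i j

variable {ι : Type} (M : ι → Mat C ar)

instance [Finite ι] [∀ j, Finite (M j).V] : Finite (pi M).V :=
  inferInstanceAs (Finite (∀ j, (M j).V))

theorem pi_eval (I : ℕ → (pi M).V) (A : Fml C ar) (j : ι) :
    (pi M).eval I A j = (M j).eval (fun n => I n j) A := by
  induction A with
  | var n => rfl
  | app c f ih =>
    show (M j).interp c (fun i => (pi M).eval I (f i) j) = _
    simp only [ih, eval]

theorem taut_pi [∀ j, Nonempty (M j).V] : (pi M).Taut = ⋂ j, (M j).Taut := by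
  classical
  ext A
  refine ⟨fun hA => Set.mem_iInter.2 fun j I => ?_, fun hA I j _ => ?_⟩
  · let J : ℕ → (pi M).V := fun n => Function.update (fun _ => Classical.arbitrary _) j (I n)
    have hJ : (fun n => J n j) = I := funext fun n => Function.update_self ..
    simpa only [pi_eval, hJ] using hA J j trivial
  · rw [pi_eval]
    exact Set.mem_iInter.1 hA j _

def prefixPi (N : ℕ → Mat C ar) (i : ℕ) : Mat C ar :=
  pi fun j : Fin (i + 1) => N j

variable (N : ℕ → Mat C ar)

instance [∀ i, Finite (N i).V] (i : ℕ) : Finite (prefixPi N i).V :=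
  inferInstanceAs (Finite (pi _).V)

variable [∀ i, Nonempty (N i).V]

theorem taut_prefixPi (i : ℕ) : (prefixPi N i).Taut = ⋂ j : Fin (i + 1), (N j).Taut :=
  taut_pi _

theorem taut_prefixPi_succ_subset (i : ℕ) : (prefixPi N (i + 1)).Taut ⊆ (prefixPi N i).Taut := by
  rw [taut_prefixPi, taut_prefixPi]
  exact fun A hA => Set.mem_iInter.2 fun j => Set.mem_iInter.1 hA j.castSucc

theorem iInter_taut_prefixPi : ⋂ i, (prefixPi N i).Taut = ⋂ i, (N i).Taut := by
  simp only [taut_prefixPi]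
  refine subset_antisymm (fun A hA => Set.mem_iInter.2 fun i => ?_) fun A hA => ?_
  · exact Set.mem_iInter.1 (Set.mem_iInter.1 hA i) (Fin.last i)
  · exact Set.mem_iInter₂.2 fun i j => Set.mem_iInter.1 hA j

end Mat

theorem sequential_approximation_of_decidable_logic_general
    [Fintype C] (L : Set (Fml C ar))
    (hsub : ∀ A ∈ L, ∀ σ : ℕ → Fml C ar, subst σ A ∈ L) :
    ∃ M : ℕ → Mat C ar, (∀ i, Finite (M i).V) ∧
      (∀ i, L ⊆ (M i).Taut) ∧
      (∀ i, (M (i + 1)).Taut ⊆ (M i).Taut) ∧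
      (⋂ i, (M i).Taut) = L := by
  have hM : ⋂ i, (Mat.prefixPi (fun n => boundedMat L n n) i).Taut = L := by
    rw [Mat.iInter_taut_prefixPi, iInter_taut_boundedMat L hsub]
  exact ⟨_, fun _ => inferInstance, fun i => hM.ge.trans (Set.iInter_subset _ i),
    Mat.taut_prefixPi_succ_subset _, hM⟩

/-- Proposition 6.1: every decidable propositional logic `L` (a decidable set
of formulas closed under substitution) is the intersection of a decreasing
sequence of tautology sets of finite-valued matrices, each containing `L`. -/
theorem sequential_approximation_of_decidable_logic
    [Fintype C] [DecidableEq C] [Encodable C] (L : Set (Fml C ar))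
    (hsub : ∀ A ∈ L, ∀ σ : ℕ → Fml C ar, subst σ A ∈ L)
    (hdec : ∃ f : ℕ → Bool, Computable f ∧
      ∀ A : Fml C ar, (f (encF A) = true ↔ A ∈ L)) :
    ∃ M : ℕ → Mat C ar, (∀ i, Finite (M i).V) ∧
      (∀ i, L ⊆ (M i).Taut) ∧
      (∀ i, (M (i + 1)).Taut ⊆ (M i).Taut) ∧
      (⋂ i, (M i).Taut) = L :=
  sequential_approximation_of_decidable_logic_general L hsub
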